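/- arXiv:2410.12283 — 7 statements merged into one kernel-verified Lean document; each statement's English description precedes it below -/
import Mathlib

section
/- Let n ≥ 1, let g : ℝⁿ → ℝ be three times continuously differentiable with ∇g(x) ≠ 0 for every x with g(x) = 0. Then for every continuous compactly supported function f : ℝⁿ → ℝ and every ε > 0 there exists a twice continuously differentiable, compactly supported function φ : ℝⁿ → ℝ such that ⟨∇φ(x), ∇g(x)⟩ = 0 for every x with g(x) = 0, and sup_{x ∈ ℝⁿ} |φ(x) − f(x)| < ε. (In other words, the C²-compactly-supported functions whose gradient is tangent along the zero level set of g are dense in the continuous compactly supported functions with respect to the supremum norm.) -/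
/-!
Approximate `f` uniformly by a smooth compactly supported `ψ` and set `φ = ψ - θ ∘ g * w`, where
`w = ⟪∇ψ, ∇g⟫ / ‖∇g‖²` on `{g = 0}` (cut off smoothly near the critical set of `g`) and `θ` is a
bounded smooth function with `θ 0 = 0`, `θ' 0 = 1`. On `{g = 0}` the correction has gradient
`w • ∇g`, which removes exactly the normal component of `∇ψ`, while `|θ| ≤ δ` keeps it uniformly
small.
-/

open scoped ContDiff Manifold

section SmoothApprox

variable {E F : Type*} [NormedAddCommGroup E] [NormedSpace ℝ E] [FiniteDimensional ℝ E]
  [NormedAddCommGroup F] [NormedSpace ℝ F] [CompleteSpace F] {f : E → F} {ε : ℝ}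

theorem HasCompactSupport.exists_contDiff_hasCompactSupport_dist_lt (hfc : HasCompactSupport f)
    (hf : Continuous f) (hε : 0 < ε) :
    ∃ g : E → F, ContDiff ℝ ∞ g ∧ HasCompactSupport g ∧ ∀ x, dist (g x) (f x) < ε := by
  obtain ⟨g, hg, hgf⟩ := (hfc.uniformContinuous_of_continuous hf).exists_contDiff_dist_le hε
  obtain ⟨R, hR⟩ := (Metric.isBounded_iff_subset_closedBall 0).mp hfc.isCompact.isBounded
  let χ : ContDiffBump (0 : E) := ⟨max R 0 + 1, max R 0 + 2, by positivity, by linarith⟩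
  refine ⟨fun x ↦ χ x • g x, χ.contDiff.smul hg, χ.hasCompactSupport.smul_right, fun x ↦ ?_⟩
  by_cases hx : x ∈ tsupport f
  · have hχ : χ x = 1 := χ.one_of_mem_closedBall <|
      Metric.closedBall_subset_closedBall (by simp only [χ]; linarith [le_max_left R 0]) (hR hx)
    simpa [hχ] using hgf x
  · calc dist (χ x • g x) (f x) = χ x * ‖g x‖ := by
          rw [image_eq_zero_of_notMem_tsupport hx, dist_zero_right, norm_smul,
            Real.norm_of_nonneg χ.nonneg]
      _ ≤ ‖g x‖ := mul_le_of_le_one_left (norm_nonneg _) χ.le_one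
      _ < ε := by simpa [image_eq_zero_of_notMem_tsupport hx] using hgf x

end SmoothApprox

section Gradient

open InnerProductSpace

variable {F : Type*} [NormedAddCommGroup F] [InnerProductSpace ℝ F] [CompleteSpace F]
  {f : F → ℝ}

theorem ContDiff.gradient {n : WithTop ℕ∞} (hf : ContDiff ℝ (n + 1) f) :
    ContDiff ℝ n (gradient f) :=
  (toDual ℝ F).symm.contDiff.comp (hf.fderiv_right le_rfl)

theorem HasCompactSupport.gradient (hf : HasCompactSupport f) : HasCompactSupport (gradient f) :=
  hf.fderiv (𝕜 := ℝ) |>.comp_left (map_zero _)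

theorem HasGradientAt.sub_comp_mul {ψ g w : F → ℝ} {θ : ℝ → ℝ} {ψ' g' x : F}
    (hψ : HasGradientAt ψ ψ' x) (hg : HasGradientAt g g' x) (hw : DifferentiableAt ℝ w x)
    (hθ : HasDerivAt θ 1 (g x)) (hθg : θ (g x) = 0) :
    HasGradientAt (fun y ↦ ψ y - θ (g y) * w y) (ψ' - w x • g') x := by
  rw [hasGradientAt_iff_hasFDerivAt] at *
  refine (hψ.sub ((hθ.comp_hasFDerivAt x hg).mul hw.hasFDerivAt)).congr_fderiv ?_
  simp [hθg]

end Gradient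

theorem Real.exists_contDiff_abs_le_hasDerivAt_zero_one {δ : ℝ} (hδ : 0 < δ) :
    ∃ θ : ℝ → ℝ, ContDiff ℝ ∞ θ ∧ θ 0 = 0 ∧ HasDerivAt θ 1 0 ∧ ∀ t, |θ t| ≤ δ := by
  refine ⟨fun t ↦ δ / 2 * arctan (2 / δ * t),
    contDiff_const.mul (contDiff_arctan.comp (contDiff_const.mul contDiff_id)), by simp, ?_,
    fun t ↦ ?_⟩
  · refine (((hasDerivAt_id' (0 : ℝ)).const_mul (2 / δ)).arctan.const_mul (δ / 2)).congr_deriv ?_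
    field_simp
    norm_num
  · have : |arctan (2 / δ * t)| ≤ 2 :=
      abs_le.mpr ⟨by linarith [neg_pi_div_two_lt_arctan (2 / δ * t), pi_lt_four],
        by linarith [arctan_lt_pi_div_two (2 / δ * t), pi_lt_four]⟩
    rw [abs_mul, abs_of_pos (half_pos hδ)]
    nlinarith

section Cutoff

variable {E : Type*} [NormedAddCommGroup E] [NormedSpace ℝ E] [FiniteDimensional ℝ E]

theorem exists_contDiff_hasCompactSupport_eqOn_div {h D : E → ℝ} {Z : Set E} {n : ℕ∞}
    (hh : ContDiff ℝ n h) (hhc : HasCompactSupport h) (hD : ContDiff ℝ n D) (hZ : IsClosed Z)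
    (hDZ : ∀ x ∈ Z, D x ≠ 0) :
    ∃ w : E → ℝ, ContDiff ℝ n w ∧ HasCompactSupport w ∧ ∀ x ∈ Z, w x = h x / D x := by
  have hS : IsClosed {x | D x = 0} := isClosed_eq hD.continuous continuous_const
  obtain ⟨χ, hχ0, hχ1, -⟩ := exists_contMDiffMap_zero_one_nhds_of_isClosed 𝓘(ℝ, E) (n := ⊤)
    hS hZ (Set.disjoint_left.mpr fun x hx hxZ ↦ hDZ x hxZ hx)
  have hχ : ContDiff ℝ n χ :=
    (contMDiff_iff_contDiff.mp χ.contMDiff).of_le (by exact_mod_cast le_top)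
  refine ⟨fun x ↦ χ x * (h x / D x), contDiff_iff_contDiffAt.mpr fun x ↦ ?_,
    hhc.mono fun x hx h0 ↦ hx (by simp [h0]), fun x hx ↦ by simp [hχ1.self_of_nhdsSet x hx]⟩
  by_cases hx : D x = 0
  · refine (contDiffAt_const (c := (0 : ℝ))).congr_of_eventuallyEq ?_
    filter_upwards [hχ0.filter_mono (nhds_le_nhdsSet (s := {x | D x = 0}) hx)] with y hy
    simp [hy]
  · exact hχ.contDiffAt.mul (hh.contDiffAt.div hD.contDiffAt hx)

end Cutoff

theorem stmt_0_general (n : ℕ) (g : EuclideanSpace ℝ (Fin n) → ℝ)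
    (hg : ContDiff ℝ 3 g)
    (hg' : ∀ x, g x = 0 → gradient g x ≠ 0)
    (f : EuclideanSpace ℝ (Fin n) → ℝ) (hf : Continuous f) (hfc : HasCompactSupport f)
    (ε : ℝ) (hε : 0 < ε) :
    ∃ φ : EuclideanSpace ℝ (Fin n) → ℝ, ContDiff ℝ 2 φ ∧ HasCompactSupport φ ∧
      (∀ x, g x = 0 → (inner ℝ (gradient φ x) (gradient g x) : ℝ) = 0) ∧
      ∀ x, |φ x - f x| < ε := by
  obtain ⟨ψ, hψ, hψc, hψf⟩ := hfc.exists_contDiff_hasCompactSupport_dist_lt hf (half_pos hε)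
  have hψ3 : ContDiff ℝ 3 ψ := hψ.of_le (by norm_cast)
  have hgradψ : ContDiff ℝ 2 (gradient ψ) := hψ3.gradient
  have hgradg : ContDiff ℝ 2 (gradient g) := hg.gradient
  obtain ⟨w, hw, hwc, hwZ⟩ := exists_contDiff_hasCompactSupport_eqOn_div (n := 2)
    (hgradψ.inner ℝ hgradg) (hψc.gradient.mono fun x hx h0 ↦ hx (by simp [h0]))
    (hgradg.norm_sq ℝ) (isClosed_singleton.preimage hg.continuous)
    fun x hx ↦ pow_ne_zero 2 (norm_ne_zero_iff.mpr (hg' x hx))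
  obtain ⟨M, hM⟩ := hw.continuous.bounded_above_of_compact_support hwc
  obtain ⟨θ, hθ, hθ0, hθ', hθδ⟩ :=
    Real.exists_contDiff_abs_le_hasDerivAt_zero_one (δ := ε / (2 * (|M| + 1))) (by positivity)
  refine ⟨fun x ↦ ψ x - θ (g x) * w x, ?_, hψc.sub hwc.mul_left, fun x hx ↦ ?_, fun x ↦ ?_⟩
  · exact (hψ3.of_le (by norm_num)).sub
      (((hθ.of_le (by norm_cast)).comp (hg.of_le (by norm_num))).mul hw)
  · have hgx : HasGradientAt g (gradient g x) x :=
      (hg.differentiable (by norm_num) x).hasGradientAt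
    rw [((hψ3.differentiable (by norm_num) x).hasGradientAt.sub_comp_mul hgx
      (hw.differentiable (by norm_num) x) (hx ▸ hθ') (hx ▸ hθ0)).gradient, inner_sub_left,
      real_inner_smul_left, hwZ x hx, real_inner_self_eq_norm_sq,
      div_mul_cancel₀ _ (pow_ne_zero 2 (norm_ne_zero_iff.mpr (hg' x hx))), sub_self]
  · have hθw : |θ (g x)| * |w x| ≤ ε / 2 := by
      calc |θ (g x)| * |w x| ≤ ε / (2 * (|M| + 1)) * (|M| + 1) :=
            mul_le_mul (hθδ _) ((hM x).trans ((le_abs_self M).trans (by linarith))) (abs_nonneg _)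
              (by positivity)
        _ = ε / 2 := by field_simp
    calc |ψ x - θ (g x) * w x - f x| = |(ψ x - f x) - θ (g x) * w x| := by congr 1; ring
      _ ≤ |ψ x - f x| + |θ (g x)| * |w x| := (abs_sub _ _).trans_eq (by rw [abs_mul])
      _ < ε := by linarith [hψf x, Real.dist_eq (ψ x) (f x)]

/-- The C²-compactly-supported functions whose gradient is tangent along the zero
level set of `g` are dense in the continuous compactly supported functions with
respect to the supremum norm. -/
theorem stmt_0 (n : ℕ) (hn : 1 ≤ n) (g : EuclideanSpace ℝ (Fin n) → ℝ)
    (hg : ContDiff ℝ 3 g)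
    (hg' : ∀ x, g x = 0 → gradient g x ≠ 0)
    (f : EuclideanSpace ℝ (Fin n) → ℝ) (hf : Continuous f) (hfc : HasCompactSupport f)
    (ε : ℝ) (hε : 0 < ε) :
    ∃ φ : EuclideanSpace ℝ (Fin n) → ℝ, ContDiff ℝ 2 φ ∧ HasCompactSupport φ ∧
      (∀ x, g x = 0 → (inner ℝ (gradient φ x) (gradient g x) : ℝ) = 0) ∧
      ∀ x, |φ x - f x| < ε :=
  stmt_0_general n g hg hg' f hf hfc ε hε
end

section
/- Let n ≥ 1, let (μ_t)_{t ≥ 0} be a family of Radon measures on ℝⁿ, let H : [0,∞) × ℝⁿ → ℝⁿ be measurable, and let φ : ℝⁿ → ℝ be a nonnegative, twice continuously differentiable, compactly supported function. Assume: (i) there is C₀ ≥ 0 with μ_t(supp φ) ≤ C₀ for all t ≥ 0; (ii) for every 0 ≤ t₁ < t₂ the map t ↦ ∫ (⟨∇φ(x), H(t,x)⟩ − φ(x)‖H(t,x)‖²) dμ_t(x) is integrable on [t₁,t₂] and ∫φ dμ_{t₂} − ∫φ dμ_{t₁} ≤ ∫_{t₁}^{t₂} ∫ (⟨∇φ(x),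 H(t,x)⟩ − φ(x)‖H(t,x)‖²) dμ_t(x) dt. Then, with C₁ := C₀ · sup_y ‖∇²φ(y)‖, the function t ↦ ∫φ dμ_t − C₁·t is nonincreasing on [0,∞). -/
/-!
It suffices to bound the integrand of Brakke's inequality pointwise. For a nonnegative `C²`
function `φ` with `‖D²φ‖ ≤ M`, the mean value inequality for `Dφ` gives
`0 ≤ φ (x + t v) ≤ φ x + t Dφ(x) v + M t² ‖v‖²` for every `t`, so the discriminant of this
quadratic in `t` is nonpositive: `(Dφ(x) v)² ≤ 4 M φ(x) ‖v‖²`. By AM-GM this yields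
`⟪∇φ x, v⟫ - φ x ‖v‖² ≤ M`. The integrand vanishes off `tsupport φ`, whose `μ_t`-mass is at most
`C₀`, so the time integrand is at most `C₀ M`, and Brakke's inequality on `[t₁, t₂]` gives
`∫φ dμ_{t₂} - ∫φ dμ_{t₁} ≤ C₀ M (t₂ - t₁)`.
-/

open MeasureTheory

section

variable {E : Type*} [NormedAddCommGroup E] [NormedSpace ℝ E] {φ : E → ℝ} {M : ℝ}

theorem norm_fderiv_sub_fderiv_le (hφ : ContDiff ℝ 2 φ)
    (hM : ∀ y, ‖iteratedFDeriv ℝ 2 φ y‖ ≤ M) (x y : E) :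
    ‖fderiv ℝ φ y - fderiv ℝ φ x‖ ≤ M * ‖y - x‖ := by
  have hφ' : Differentiable ℝ (fderiv ℝ φ) :=
    (hφ.fderiv_right (m := 1) (by norm_num)).differentiable (by norm_num)
  refine convex_univ.norm_image_sub_le_of_norm_fderiv_le (fun z _ => hφ' z) (fun z _ => ?_)
    trivial trivial
  rw [← norm_iteratedFDeriv_one, norm_iteratedFDeriv_fderiv]
  exact hM z

theorem image_le_add_fderiv_add_sq (hφ : ContDiff ℝ 2 φ)
    (hM : ∀ y, ‖iteratedFDeriv ℝ 2 φ y‖ ≤ M) (x y : E) :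
    φ y ≤ φ x + fderiv ℝ φ x (y - x) + M * ‖y - x‖ ^ 2 := by
  have hφd : Differentiable ℝ φ := hφ.differentiable (by norm_num)
  have key : ‖φ y - φ x - fderiv ℝ φ x (y - x)‖ ≤ M * ‖y - x‖ * ‖y - x‖ := by
    refine (convex_closedBall x ‖y - x‖).norm_image_sub_le_of_norm_fderiv_le'
      (fun z _ => hφd z) (fun z hz => ?_) (Metric.mem_closedBall_self (norm_nonneg _)) ?_
    · have hM0 : 0 ≤ M := (norm_nonneg _).trans (hM x)
      calc ‖fderiv ℝ φ z - fderiv ℝ φ x‖ ≤ M * ‖z - x‖ := norm_fderiv_sub_fderiv_le hφ hM x z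
        _ ≤ M * ‖y - x‖ := by gcongr; rwa [← dist_eq_norm]
    · rw [Metric.mem_closedBall, dist_eq_norm]
  have := (le_abs_self _).trans ((Real.norm_eq_abs _).symm.trans_le key)
  linarith

theorem sq_fderiv_apply_le_of_nonneg (hφ : ContDiff ℝ 2 φ) (hφ0 : ∀ x, 0 ≤ φ x)
    (hM : ∀ y, ‖iteratedFDeriv ℝ 2 φ y‖ ≤ M) (x v : E) :
    fderiv ℝ φ x v ^ 2 ≤ 4 * M * φ x * ‖v‖ ^ 2 := by
  have hquad : ∀ t : ℝ, 0 ≤ (M * ‖v‖ ^ 2) * (t * t) + fderiv ℝ φ x v * t + φ x := by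
    intro t
    have h := image_le_add_fderiv_add_sq hφ hM x (x + t • v)
    rw [add_sub_cancel_left, map_smul, smul_eq_mul, norm_smul, Real.norm_eq_abs, mul_pow,
      sq_abs] at h
    nlinarith [hφ0 (x + t • v)]
  have := discrim_le_zero hquad
  rw [discrim] at this
  linarith

theorem fderiv_apply_sub_mul_sq_le (hφ : ContDiff ℝ 2 φ) (hφ0 : ∀ x, 0 ≤ φ x)
    (hM : ∀ y, ‖iteratedFDeriv ℝ 2 φ y‖ ≤ M) (x v : E) :
    fderiv ℝ φ x v - φ x * ‖v‖ ^ 2 ≤ M := by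
  have hsq := sq_fderiv_apply_le_of_nonneg hφ hφ0 hM x v
  have hM0 : 0 ≤ M := (norm_nonneg _).trans (hM x)
  have hrhs : 0 ≤ M + φ x * ‖v‖ ^ 2 := by have := hφ0 x; positivity
  -- `(M + φ x ‖v‖²)² - 4 M φ x ‖v‖² = (M - φ x ‖v‖²)²`
  have hsq' : fderiv ℝ φ x v ^ 2 ≤ (M + φ x * ‖v‖ ^ 2) ^ 2 := by
    nlinarith [sq_nonneg (M - φ x * ‖v‖ ^ 2)]
  linarith [(abs_le_of_sq_le_sq' hsq' hrhs).2]

end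

theorem inner_gradient_sub_mul_sq_le {F : Type*} [NormedAddCommGroup F]
    [InnerProductSpace ℝ F] [CompleteSpace F] {φ : F → ℝ} {M : ℝ} (hφ : ContDiff ℝ 2 φ) (hφ0 : ∀ x, 0 ≤ φ x)
    (hM : ∀ y, ‖iteratedFDeriv ℝ 2 φ y‖ ≤ M) (x v : F) :
    inner ℝ (gradient φ x) v - φ x * ‖v‖ ^ 2 ≤ M := by
  rw [gradient, InnerProductSpace.toDual_symm_apply]
  exact fderiv_apply_sub_mul_sq_le hφ hφ0 hM x v

theorem integral_le_measureReal_mul_of_le_indicator {X : Type*} [MeasurableSpace X]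
    {μ : Measure X} {f : X → ℝ} {s : Set X} {c : ℝ} (hs : MeasurableSet s) (hμs : μ s ≠ ⊤)
    (hc : 0 ≤ c) (hf : ∀ x, f x ≤ s.indicator (fun _ => c) x) :
    ∫ x, f x ∂μ ≤ μ.real s * c := by
  by_cases hint : Integrable f μ
  · calc ∫ x, f x ∂μ ≤ ∫ x, s.indicator (fun _ => c) x ∂μ :=
          integral_mono hint ((integrable_indicator_iff hs).2 (integrableOn_const hμs)) hf
      _ = μ.real s * c := integral_indicator_const c hs
  · rw [integral_undef hint]
    exact mul_nonneg measureReal_nonneg hc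

theorem integral_inner_gradient_sub_mul_sq_le {F : Type*} [NormedAddCommGroup F]
    [InnerProductSpace ℝ F] [CompleteSpace F] [MeasurableSpace F] [OpensMeasurableSpace F]
    {φ : F → ℝ} {M C₀ : ℝ} (hφ : ContDiff ℝ 2 φ) (hφ0 : ∀ x, 0 ≤ φ x)
    (hM : ∀ y, ‖iteratedFDeriv ℝ 2 φ y‖ ≤ M) (hC₀ : 0 ≤ C₀) {μ : Measure F}
    (hμ : μ (tsupport φ) ≤ ENNReal.ofReal C₀) (G : F → F) :
    ∫ x, (inner ℝ (gradient φ x) (G x) - φ x * ‖G x‖ ^ 2) ∂μ ≤ C₀ * M := by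
  have hM0 : 0 ≤ M := (norm_nonneg _).trans (hM 0)
  have hle : ∀ x, inner ℝ (gradient φ x) (G x) - φ x * ‖G x‖ ^ 2 ≤
      (tsupport φ).indicator (fun _ => M) x := by
    intro x
    by_cases hx : x ∈ tsupport φ
    · rw [Set.indicator_of_mem hx]
      exact inner_gradient_sub_mul_sq_le hφ hφ0 hM x (G x)
    · have hDφ : fderiv ℝ φ x = 0 :=
        Function.notMem_support.1 fun h => hx (support_fderiv_subset ℝ h)
      simp [Set.indicator_of_notMem hx, image_eq_zero_of_notMem_tsupport hx, gradient, hDφ]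
  calc _ ≤ μ.real (tsupport φ) * M :=
        integral_le_measureReal_mul_of_le_indicator (isClosed_tsupport φ).measurableSet
          (hμ.trans_lt ENNReal.ofReal_lt_top).ne hM0 hle
    _ ≤ C₀ * M := by gcongr; exact ENNReal.toReal_le_of_le_ofReal hC₀ hμ

theorem stmt_2_general (n : ℕ)
    (μ : ℝ → Measure (EuclideanSpace ℝ (Fin n)))
    (H : ℝ → EuclideanSpace ℝ (Fin n) → EuclideanSpace ℝ (Fin n))
    (φ : EuclideanSpace ℝ (Fin n) → ℝ)
    (hφ : ContDiff ℝ 2 φ) (hφc : HasCompactSupport φ) (hφ0 : ∀ x, 0 ≤ φ x)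
    (C₀ : ℝ) (hC₀ : 0 ≤ C₀)
    (hmass : ∀ t, 0 ≤ t → μ t (tsupport φ) ≤ ENNReal.ofReal C₀)
    (hBrakke : ∀ t₁ t₂, 0 ≤ t₁ → t₁ < t₂ →
      IntervalIntegrable
        (fun t => ∫ x, ((inner ℝ (gradient φ x) (H t x) : ℝ) - φ x * ‖H t x‖ ^ 2) ∂ μ t)
        volume t₁ t₂ ∧
      (∫ x, φ x ∂ μ t₂) - (∫ x, φ x ∂ μ t₁) ≤
        ∫ t in t₁..t₂,
          ∫ x, ((inner ℝ (gradient φ x) (H t x) : ℝ) - φ x * ‖H t x‖ ^ 2) ∂ μ t) :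
    AntitoneOn
      (fun t => (∫ x, φ x ∂ μ t) - (C₀ * ⨆ y, ‖iteratedFDeriv ℝ 2 φ y‖) * t)
      (Set.Ici 0) := by
  set M := ⨆ y, ‖iteratedFDeriv ℝ 2 φ y‖
  have hM : ∀ y, ‖iteratedFDeriv ℝ 2 φ y‖ ≤ M := le_ciSup <|
    (hφ.continuous_iteratedFDeriv le_rfl).norm.bddAbove_range_of_hasCompactSupport
      (hφc.iteratedFDeriv 2).norm
  intro a ha b _ hab
  obtain rfl | hlt := hab.eq_or_lt
  · rfl
  obtain ⟨hint, hineq⟩ := hBrakke a b ha hlt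
  have hbound := intervalIntegral.integral_mono_on hab hint intervalIntegrable_const
    fun t ht => integral_inner_gradient_sub_mul_sq_le hφ hφ0 hM hC₀ (hmass t (ha.trans ht.1)) (H t)
  rw [intervalIntegral.integral_const, smul_eq_mul] at hbound
  linarith

/-- Semi-decreasing property of the mass of a Brakke flow (Lemma 4.1 (1)). -/
theorem stmt_2 (n : ℕ) (hn : 1 ≤ n)
    (μ : ℝ → Measure (EuclideanSpace ℝ (Fin n)))
    (hrad : ∀ t, IsLocallyFiniteMeasure (μ t))
    (H : ℝ → EuclideanSpace ℝ (Fin n) → EuclideanSpace ℝ (Fin n))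
    (hH : Measurable (Function.uncurry H))
    (φ : EuclideanSpace ℝ (Fin n) → ℝ)
    (hφ : ContDiff ℝ 2 φ) (hφc : HasCompactSupport φ) (hφ0 : ∀ x, 0 ≤ φ x)
    (C₀ : ℝ) (hC₀ : 0 ≤ C₀)
    (hmass : ∀ t, 0 ≤ t → μ t (tsupport φ) ≤ ENNReal.ofReal C₀)
    (hBrakke : ∀ t₁ t₂, 0 ≤ t₁ → t₁ < t₂ →
      IntervalIntegrable
        (fun t => ∫ x, ((inner ℝ (gradient φ x) (H t x) : ℝ) - φ x * ‖H t x‖ ^ 2) ∂ μ t)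
        volume t₁ t₂ ∧
      (∫ x, φ x ∂ μ t₂) - (∫ x, φ x ∂ μ t₁) ≤
        ∫ t in t₁..t₂,
          ∫ x, ((inner ℝ (gradient φ x) (H t x) : ℝ) - φ x * ‖H t x‖ ^ 2) ∂ μ t) :
    AntitoneOn
      (fun t => (∫ x, φ x ∂ μ t) - (C₀ * ⨆ y, ‖iteratedFDeriv ℝ 2 φ y‖) * t)
      (Set.Ici 0) :=
  stmt_2_general n μ H φ hφ hφc hφ0 C₀ hC₀ hmass hBrakke
end

section
/- Let n ≥ 1 and let (μ_t)_{t ≥ 0} be a family of Radon measures on ℝⁿ such that sup_{t ≥ 0} μ_t(K) < ∞ for every compact K ⊂ ℝⁿ, and such that for every nonnegative, twice continuously differentiable, compactly supported φ : ℝⁿ → ℝ there exists a constant C(φ) ≥ 0 for which t ↦ ∫φ dμ_t − C(φ)·t is nonincreasing on [0,∞). Then for every t ≥ 0 and every nonnegative continuous compactly supported ψ : ℝⁿ → ℝ, the one-sided limits lim_{s → t⁺} ∫ψ dμ_s exists, when t > 0 the limit lim_{s → t⁻} ∫ψ dμ_s exists, and lim_{s → t⁺} ∫ψ dμ_s ≤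 ∫ψ dμ_t ≤ lim_{s → t⁻} ∫ψ dμ_s. -/
/-!
On `[0, ∞)` the function `s ↦ ∫ ψ dμ_s` is a uniform limit of the semi-decreasing functions
`s ↦ ∫ φ dμ_s`, `φ` a mollification of `ψ`: the error is at most `‖φ - ψ‖_∞` times the mass of a
fixed compact neighbourhood of `supp ψ`, which is bounded uniformly in `s`. A semi-decreasing
function is an antitone function plus a continuous one, so it has one-sided limits satisfying
`lim_{s → t⁺} ≤ value at t ≤ lim_{s → t⁻}`. Both properties survive uniform limits: the limits exist
by the Cauchy criterion, and the inequalities hold up to an arbitrarily small error.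
-/

open MeasureTheory Filter Topology Set Metric Function
open scoped ENNReal Convolution ContDiff

def IsSemiDecreasingOn (g : ℝ → ℝ) (s : Set ℝ) : Prop :=
  ∃ C : ℝ, AntitoneOn (fun t => g t - C * t) s

namespace IsSemiDecreasingOn

variable {g : ℝ → ℝ} {a t : ℝ}

lemma exists_tendsto_nhdsGT_le (hg : IsSemiDecreasingOn g (Ici a)) (ht : a ≤ t) :
    ∃ R, Tendsto g (𝓝[>] t) (𝓝 R) ∧ R ≤ g t := by
  obtain ⟨C, hC⟩ := hg
  set h := fun s => g s - C * s
  have hsub : Ioo t (t + 1) ⊆ Ici a := fun s hs => ht.trans hs.1.le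
  have hne : (Ioo t (t + 1)).Nonempty := nonempty_Ioo.2 (lt_add_one t)
  have hbound : ∀ y ∈ h '' Ioo t (t + 1), y ≤ h t := by
    rintro _ ⟨s, hs, rfl⟩
    exact hC ht (hsub hs) hs.1.le
  have hlim := (hC.mono hsub).tendsto_nhdsWithin_Ioo_right hne ⟨_, hbound⟩
  have hlin : Tendsto (fun s => C * s) (𝓝[>] t) (𝓝 (C * t)) :=
    ((continuous_const_mul C).tendsto t).mono_left nhdsWithin_le_nhds
  refine ⟨sSup (h '' Ioo t (t + 1)) + C * t, by simpa [h] using hlim.add hlin, ?_⟩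
  linarith [csSup_le (hne.image h) hbound]

lemma exists_tendsto_nhdsLT_ge (hg : IsSemiDecreasingOn g (Ici a)) (ht : a < t) :
    ∃ L, Tendsto g (𝓝[<] t) (𝓝 L) ∧ g t ≤ L := by
  obtain ⟨C, hC⟩ := hg
  set h := fun s => g s - C * s
  have hsub : Ioo a t ⊆ Ici a := fun s hs => hs.1.le
  have hne : (Ioo a t).Nonempty := nonempty_Ioo.2 ht
  have hbound : ∀ y ∈ h '' Ioo a t, h t ≤ y := by
    rintro _ ⟨s, hs, rfl⟩
    exact hC (hsub hs) ht.le hs.2.le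
  have hlim := (hC.mono hsub).tendsto_nhdsWithin_Ioo_left hne ⟨_, hbound⟩
  have hlin : Tendsto (fun s => C * s) (𝓝[<] t) (𝓝 (C * t)) :=
    ((continuous_const_mul C).tendsto t).mono_left nhdsWithin_le_nhds
  refine ⟨sInf (h '' Ioo a t) + C * t, by simpa [h] using hlim.add hlin, ?_⟩
  linarith [le_csInf (hne.image h) hbound]

end IsSemiDecreasingOn

section UniformApproximation

variable {α : Type*} {l : Filter α} [l.NeBot]

lemma exists_tendsto_of_forall_eventually_dist_le {E : Type*} [PseudoMetricSpace E]
    [CompleteSpace E] {f : α → E}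
    (h : ∀ ε > 0, ∃ g : α → E, ∃ L, Tendsto g l (𝓝 L) ∧ ∀ᶠ x in l, dist (f x) (g x) ≤ ε) :
    ∃ R, Tendsto f l (𝓝 R) := by
  refine cauchy_map_iff_exists_tendsto.1 (Metric.cauchy_iff.2 ⟨map_neBot, fun ε hε => ?_⟩)
  obtain ⟨g, L, hg, hfg⟩ := h (ε / 4) (by positivity)
  have hev : ∀ᶠ x in l, dist (f x) (g x) ≤ ε / 4 ∧ dist (g x) L < ε / 4 :=
    hfg.and (Metric.tendsto_nhds.1 hg _ (by positivity))
  refine ⟨f '' {x | dist (f x) (g x) ≤ ε / 4 ∧ dist (g x) L < ε / 4}, image_mem_map hev, ?_⟩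
  rintro _ ⟨x, hx, rfl⟩ _ ⟨y, hy, rfl⟩
  calc dist (f x) (f y) ≤ dist (f x) (g x) + dist (g x) L + dist (g y) L + dist (f y) (g y) := by
        linarith [dist_triangle4 (f x) (g x) (g y) (f y), dist_triangle_right (g x) (g y) L,
          dist_comm (g y) (f y)]
    _ < ε := by linarith [hx.1, hx.2, hy.1, hy.2]

lemma exists_tendsto_le_of_forall_eventually_dist_le {f : α → ℝ} {b : ℝ}
    (h : ∀ ε > 0, ∃ g : α → ℝ, ∃ L, Tendsto g l (𝓝 L) ∧ L ≤ b + ε ∧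
      ∀ᶠ x in l, dist (f x) (g x) ≤ ε) :
    ∃ R, Tendsto f l (𝓝 R) ∧ R ≤ b := by
  obtain ⟨R, hR⟩ := exists_tendsto_of_forall_eventually_dist_le fun ε hε =>
    let ⟨g, L, hg, _, hfg⟩ := h ε hε; ⟨g, L, hg, hfg⟩
  refine ⟨R, hR, le_of_forall_pos_le_add fun ε hε => ?_⟩
  obtain ⟨g, L, hg, hLb, hfg⟩ := h (ε / 2) (half_pos hε)
  have hRL : dist R L ≤ ε / 2 := le_of_tendsto (hR.dist hg) hfg
  linarith [le_abs_self (R - L), Real.dist_eq R L]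

variable {F : ℝ → ℝ} {a t : ℝ}

lemma exists_tendsto_nhdsGT_le_of_forall_dist_le
    (h : ∀ ε > 0, ∃ G, IsSemiDecreasingOn G (Ici a) ∧ ∀ s ∈ Ici a, dist (F s) (G s) ≤ ε)
    (ht : a ≤ t) :
    ∃ R, Tendsto F (𝓝[>] t) (𝓝 R) ∧ R ≤ F t := by
  refine exists_tendsto_le_of_forall_eventually_dist_le fun ε hε => ?_
  obtain ⟨G, hG, hFG⟩ := h ε hε
  obtain ⟨L, hL, hLG⟩ := hG.exists_tendsto_nhdsGT_le ht
  refine ⟨G, L, hL, ?_, ?_⟩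
  · linarith [neg_abs_le (F t - G t), Real.dist_eq (F t) (G t), hFG t ht]
  · filter_upwards [self_mem_nhdsWithin] with s hs using hFG s (ht.trans hs.le)

lemma exists_tendsto_nhdsLT_ge_of_forall_dist_le
    (h : ∀ ε > 0, ∃ G, IsSemiDecreasingOn G (Ici a) ∧ ∀ s ∈ Ici a, dist (F s) (G s) ≤ ε)
    (ht : a < t) :
    ∃ L, Tendsto F (𝓝[<] t) (𝓝 L) ∧ F t ≤ L := by
  suffices ∃ R, Tendsto (fun s => -F s) (𝓝[<] t) (𝓝 R) ∧ R ≤ -F t by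
    obtain ⟨R, hR, hRt⟩ := this
    exact ⟨-R, by simpa using hR.neg, by linarith⟩
  refine exists_tendsto_le_of_forall_eventually_dist_le fun ε hε => ?_
  obtain ⟨G, hG, hFG⟩ := h ε hε
  obtain ⟨L, hL, hGL⟩ := hG.exists_tendsto_nhdsLT_ge ht
  refine ⟨fun s => -G s, -L, hL.neg, ?_, ?_⟩
  · linarith [le_abs_self (F t - G t), Real.dist_eq (F t) (G t), hFG t ht.le]
  · filter_upwards [Ioo_mem_nhdsLT ht] with s hs
    simpa only [dist_neg_neg] using hFG s hs.1.le

end UniformApproximation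

section Mollification

variable {E : Type*} [NormedAddCommGroup E] [NormedSpace ℝ E] [FiniteDimensional ℝ E]
  [MeasurableSpace E] [BorelSpace E] {ψ : E → ℝ}

lemma exists_contDiff_dist_le_of_hasCompactSupport (hψ : Continuous ψ)
    (hψc : HasCompactSupport ψ) (hψ0 : ∀ x, 0 ≤ ψ x) {ε δ : ℝ} (hε : 0 < ε) (hδ : 0 < δ) :
    ∃ φ : E → ℝ, ContDiff ℝ ∞ φ ∧ HasCompactSupport φ ∧ (∀ x, 0 ≤ φ x) ∧
      (∀ x, dist (φ x) (ψ x) ≤ ε) ∧ support φ ⊆ cthickening δ (tsupport ψ) := by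
  obtain ⟨η, hη, hψη⟩ :=
    Metric.uniformContinuous_iff.1 (hψc.uniformContinuous_of_continuous hψ) ε hε
  set r := min η δ
  have hr : 0 < r := lt_min hη hδ
  let b : ContDiffBump (0 : E) := ⟨r / 2, r, half_pos hr, half_lt_self hr⟩
  let μ : Measure E := Measure.addHaar
  refine ⟨b.normed μ ⋆[ContinuousLinearMap.lsmul ℝ ℝ, μ] ψ,
    b.hasCompactSupport_normed.contDiff_convolution_left _ b.contDiff_normed hψ.locallyIntegrable,
    b.hasCompactSupport_normed.convolution _ hψc, fun x => ?_, fun x => ?_, ?_⟩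
  · exact integral_nonneg fun y => mul_nonneg (b.nonneg_normed y) (hψ0 _)
  · refine b.dist_normed_convolution_le hψ.aestronglyMeasurable fun y hy => (hψη ?_).le
    exact (mem_ball.1 hy).trans_le (min_le_left _ _)
  · refine (support_convolution_subset _).trans ?_
    rintro _ ⟨p, hp, q, hq, rfl⟩
    rw [b.support_normed_eq, mem_ball_zero_iff] at hp
    refine mem_cthickening_of_dist_le _ q δ _ (subset_tsupport _ hq) ?_
    rw [dist_eq_norm, add_sub_cancel_right]
    exact hp.le.trans (min_le_right _ _)

lemma dist_integral_le_of_support_subset {X : Type*} [MeasurableSpace X] {ν : Measure X}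
    {f g : X → ℝ} (hf : Integrable f ν) (hg : Integrable g ν) {K : Set X} (hK : ν K < ⊤)
    (hfK : support f ⊆ K) (hgK : support g ⊆ K) {ε : ℝ} (hfg : ∀ x, dist (f x) (g x) ≤ ε) :
    dist (∫ x, f x ∂ν) (∫ x, g x ∂ν) ≤ ε * ν.real K := by
  rw [dist_eq_norm, ← integral_sub hf hg,
    ← setIntegral_eq_integral_of_forall_compl_eq_zero (s := K) fun x hx => ?_]
  · exact norm_setIntegral_le_of_norm_le_const hK fun x _ =>
      (dist_eq_norm _ _).symm.trans_le (hfg x)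
  · rw [notMem_support.1 (mt (@hfK x) hx), notMem_support.1 (mt (@hgK x) hx), sub_zero]

lemma exists_contDiff_forall_dist_integral_le {ι : Type*} {S : Set ι} {μ : ι → Measure E}
    (hmass : ∀ K : Set E, IsCompact K → ∃ C : ℝ≥0∞, C ≠ ⊤ ∧ ∀ i ∈ S, μ i K ≤ C)
    (hψ : Continuous ψ) (hψc : HasCompactSupport ψ) (hψ0 : ∀ x, 0 ≤ ψ x) {ε : ℝ} (hε : 0 < ε) :
    ∃ φ : E → ℝ, ContDiff ℝ ∞ φ ∧ HasCompactSupport φ ∧ (∀ x, 0 ≤ φ x) ∧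
      ∀ i ∈ S, dist (∫ x, φ x ∂μ i) (∫ x, ψ x ∂μ i) ≤ ε := by
  set K := cthickening 1 (tsupport ψ)
  obtain ⟨C, hC, hμK⟩ := hmass K hψc.cthickening
  have hC1 : 0 < C.toReal + 1 := by positivity
  obtain ⟨φ, hφ, hφc, hφ0, hφψ, hφK⟩ :=
    exists_contDiff_dist_le_of_hasCompactSupport hψ hψc hψ0 (div_pos hε hC1) one_pos
  refine ⟨φ, hφ, hφc, hφ0, fun i hi => ?_⟩
  have : IsFiniteMeasureOnCompacts (μ i) :=
    ⟨fun L hL => let ⟨_, hC, h⟩ := hmass L hL; (h i hi).trans_lt hC.lt_top⟩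
  have hψK : support ψ ⊆ K := (subset_tsupport ψ).trans (self_subset_cthickening _)
  calc dist (∫ x, φ x ∂μ i) (∫ x, ψ x ∂μ i) ≤ ε / (C.toReal + 1) * (μ i).real K :=
        dist_integral_le_of_support_subset (hφ.continuous.integrable_of_hasCompactSupport hφc)
          (hψ.integrable_of_hasCompactSupport hψc) hψc.cthickening.measure_lt_top hφK hψK hφψ
    _ ≤ ε / (C.toReal + 1) * (C.toReal + 1) := by
        gcongr
        linarith [measureReal_def (μ i) K ▸ ENNReal.toReal_mono hC (hμK i hi)]
    _ = ε := div_mul_cancel₀ ε hC1.ne'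

end Mollification

theorem stmt_4_general (n : ℕ)
    (μ : ℝ → Measure (EuclideanSpace ℝ (Fin n)))
    (hmass : ∀ K : Set (EuclideanSpace ℝ (Fin n)), IsCompact K →
      ∃ C : ℝ≥0∞, C ≠ ⊤ ∧ ∀ t, 0 ≤ t → μ t K ≤ C)
    (hsemi : ∀ φ : EuclideanSpace ℝ (Fin n) → ℝ,
      ContDiff ℝ 2 φ → HasCompactSupport φ → (∀ x, 0 ≤ φ x) →
      ∃ C : ℝ, 0 ≤ C ∧ AntitoneOn (fun t => (∫ x, φ x ∂ μ t) - C * t) (Set.Ici 0))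
    (t : ℝ) (ht : 0 ≤ t)
    (ψ : EuclideanSpace ℝ (Fin n) → ℝ)
    (hψ : Continuous ψ) (hψc : HasCompactSupport ψ) (hψ0 : ∀ x, 0 ≤ ψ x) :
    ∃ R : ℝ, Tendsto (fun s => ∫ x, ψ x ∂ μ s) (𝓝[>] t) (𝓝 R) ∧
      R ≤ ∫ x, ψ x ∂ μ t ∧
      (0 < t → ∃ L : ℝ, Tendsto (fun s => ∫ x, ψ x ∂ μ s) (𝓝[<] t) (𝓝 L) ∧
        (∫ x, ψ x ∂ μ t) ≤ L) := by
  have happrox : ∀ ε > 0, ∃ G, IsSemiDecreasingOn G (Ici 0) ∧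
      ∀ s ∈ Ici 0, dist (∫ x, ψ x ∂μ s) (G s) ≤ ε := by
    intro ε hε
    obtain ⟨φ, hφ, hφc, hφ0, hφψ⟩ :=
      exists_contDiff_forall_dist_integral_le (S := Ici 0) hmass hψ hψc hψ0 hε
    obtain ⟨C, -, hC⟩ := hsemi φ (hφ.of_le (by norm_cast)) hφc hφ0
    exact ⟨_, ⟨C, hC⟩, fun s hs => dist_comm (∫ x, φ x ∂μ s) _ ▸ hφψ s hs⟩
  obtain ⟨R, hR, hRt⟩ := exists_tendsto_nhdsGT_le_of_forall_dist_le happrox ht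
  exact ⟨R, hR, hRt, fun ht' => exists_tendsto_nhdsLT_ge_of_forall_dist_le happrox ht'⟩

/-- Existence of one-sided limits of the mass of a semi-decreasing family of Radon
measures, together with the upper-semicontinuity inequalities (Lemma 4.1 (2)). -/
theorem stmt_4 (n : ℕ) (hn : 1 ≤ n)
    (μ : ℝ → Measure (EuclideanSpace ℝ (Fin n)))
    (hrad : ∀ t, IsLocallyFiniteMeasure (μ t))
    (hmass : ∀ K : Set (EuclideanSpace ℝ (Fin n)), IsCompact K →
      ∃ C : ℝ≥0∞, C ≠ ⊤ ∧ ∀ t, 0 ≤ t → μ t K ≤ C)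
    (hsemi : ∀ φ : EuclideanSpace ℝ (Fin n) → ℝ,
      ContDiff ℝ 2 φ → HasCompactSupport φ → (∀ x, 0 ≤ φ x) →
      ∃ C : ℝ, 0 ≤ C ∧ AntitoneOn (fun t => (∫ x, φ x ∂ μ t) - C * t) (Set.Ici 0))
    (t : ℝ) (ht : 0 ≤ t)
    (ψ : EuclideanSpace ℝ (Fin n) → ℝ)
    (hψ : Continuous ψ) (hψc : HasCompactSupport ψ) (hψ0 : ∀ x, 0 ≤ ψ x) :
    ∃ R : ℝ, Tendsto (fun s => ∫ x, ψ x ∂ μ s) (𝓝[>] t) (𝓝 R) ∧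
      R ≤ ∫ x, ψ x ∂ μ t ∧
      (0 < t → ∃ L : ℝ, Tendsto (fun s => ∫ x, ψ x ∂ μ s) (𝓝[<] t) (𝓝 L) ∧
        (∫ x, ψ x ∂ μ t) ≤ L) :=
  stmt_4_general n μ hmass hsemi t ht ψ hψ hψc hψ0
end

section
/- Let n ≥ 1 and let (μ_t)_{t ≥ 0} be a family of Radon measures on ℝⁿ such that sup_{t ≥ 0} μ_t(K) < ∞ for every compact K ⊂ ℝⁿ, and such that for every nonnegative, twice continuously differentiable, compactly supported φ : ℝⁿ → ℝ there exists a constant C(φ) ≥ 0 for which t ↦ ∫φ dμ_t − C(φ)·t is nonincreasing on [0,∞). Then the set of times t ∈ (0,∞) at which there exists a nonnegative continuous compactly supported ψ : ℝⁿ → ℝ with lim_{s → t⁻} ∫ψ dμ_s ≠ lim_{s → t⁺} ∫ψ dμ_s is at most countable; i.e., at all but countably many times t the map s ↦ μ_s is weakly-* continuous at t. -/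
/-!
Fix smooth cutoffs `χₘ` equal to `1` on the ball of radius `m + 1`. Each mass
`s ↦ ∫ χₘ dμₛ` is semi-decreasing, hence continuous off a countable set of times; fix a time
`t > 0` outside all these sets. For a `C²` test function `φ` with `|φ| ≤ M χₘ`, both
`∫ (M χₘ ± φ) dμₛ` are semi-decreasing and their sum is continuous at `t`. Semi-decreasing
functions only jump down, so neither summand can jump and `s ↦ ∫ φ dμₛ` is continuous at `t`.
A continuous compactly supported `ψ` is approximated within `δ χₘ` by such `φ`, and
`∫ χₘ dμₛ` stays bounded near `t`, so `s ↦ ∫ ψ dμₛ` is continuous at `t` as a locally uniform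
limit.
-/

open MeasureTheory Filter Topology Metric Set
open scoped ContDiff ENNReal

def IsSemiDecreasing (f : ℝ → ℝ) : Prop :=
  ∃ C, 0 ≤ C ∧ AntitoneOn (fun t => f t - C * t) (Ici 0)

namespace IsSemiDecreasing

variable {f g : ℝ → ℝ} {t : ℝ}

theorem countable_not_continuousAt (hf : IsSemiDecreasing f) :
    {t | 0 < t ∧ ¬ContinuousAt f t}.Countable := by
  obtain ⟨C, -, hC⟩ := hf
  have hG : Antitone fun s => f (max s 0) - C * max s 0 := fun s s' h =>
    hC (le_max_right s 0) (le_max_right s' 0) (max_le_max h le_rfl)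
  refine hG.countable_not_continuousAt.mono ?_
  rintro t ⟨ht, hft⟩ hGt
  refine hft ?_
  have hf_eq : (fun s => f (max s 0) - C * max s 0 + C * s) =ᶠ[𝓝 t] f := by
    filter_upwards [eventually_gt_nhds ht] with s hs
    simp [max_eq_left hs.le]
  exact (hGt.add (continuousAt_const.mul continuousAt_id)).congr hf_eq

theorem continuousAt_of_continuousAt_add (hf : IsSemiDecreasing f) (hg : IsSemiDecreasing g)
    (hfg : ContinuousAt (fun s => f s + g s) t) (ht : 0 < t) : ContinuousAt f t := by
  obtain ⟨a, ha, hfa⟩ := hf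
  obtain ⟨b, hb, hgb⟩ := hg
  have hle : ∀ s ∈ Ici (0 : ℝ), ∀ s' ∈ Ici (0 : ℝ), s ≤ s' →
      |f s' - f s| ≤ |(f s' + g s') - (f s + g s)| + (a + b) * (s' - s) := by
    intro s hs s' hs' hss'
    have hf' := hfa hs hs' hss'
    have hg' := hgb hs hs' hss'
    simp only at hf' hg'
    have : 0 ≤ s' - s := sub_nonneg.2 hss'
    refine abs_sub_le_iff.2 ⟨?_, ?_⟩ <;>
      nlinarith [le_abs_self ((f s' + g s') - (f s + g s)),
        neg_abs_le ((f s' + g s') - (f s + g s))]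
  have hdist : ∀ᶠ s in 𝓝 t, dist (f s) (f t) ≤
      dist (f s + g s) (f t + g t) + (a + b) * dist s t := by
    filter_upwards [eventually_ge_nhds ht] with s hs
    simp only [Real.dist_eq]
    rcases le_total s t with hst | hts
    · rw [abs_sub_comm (f s), abs_sub_comm (f s + g s), abs_sub_comm s,
        abs_of_nonneg (sub_nonneg.2 hst)]
      exact hle s hs t ht.le hst
    · rw [abs_of_nonneg (sub_nonneg.2 hts)]
      exact hle t ht.le s hs hts
  have hbound : Tendsto (fun s => dist (f s + g s) (f t + g t) + (a + b) * dist s t) (𝓝 t)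
      (𝓝 0) := by
    simpa using (hfg.tendsto.dist (tendsto_const_nhds (x := f t + g t))).add
      ((tendsto_id.dist (tendsto_const_nhds (x := t))).const_mul (a + b))
  exact tendsto_iff_dist_tendsto_zero.2 <|
    squeeze_zero' (.of_forall fun _ => dist_nonneg) hdist hbound

end IsSemiDecreasing

section Cutoff

variable (E : Type*) [NormedAddCommGroup E] [NormedSpace ℝ E] [HasContDiffBump E]

def cutoff (m : ℕ) : ContDiffBump (0 : E) :=
  ⟨m + 1, m + 2, by positivity, by linarith⟩

variable {E}

theorem exists_eqOn_cutoff_one {K : Set E} (hK : IsCompact K) :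
    ∃ m, EqOn (cutoff E m) 1 K := by
  obtain ⟨r, hr⟩ := hK.isBounded.subset_closedBall 0
  refine ⟨⌈r⌉₊, fun x hx => (cutoff E _).one_of_mem_closedBall ?_⟩
  exact closedBall_subset_closedBall (by simp [cutoff]; linarith [Nat.le_ceil r]) (hr hx)

theorem exists_abs_le_mul_cutoff {φ : E → ℝ} (hφ : Continuous φ) (hφs : HasCompactSupport φ) :
    ∃ m, ∃ M, ∀ x, |φ x| ≤ M * cutoff E m x := by
  obtain ⟨M, hM⟩ := hφ.bounded_above_of_compact_support hφs
  obtain ⟨m, hm⟩ := exists_eqOn_cutoff_one hφs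
  refine ⟨m, M, fun x => ?_⟩
  by_cases hx : x ∈ tsupport φ
  · simpa [hm hx] using hM x
  · rw [image_eq_zero_of_notMem_tsupport hx, abs_zero]
    exact mul_nonneg ((norm_nonneg _).trans (hM x)) (cutoff E m).nonneg

end Cutoff

section WeakContinuity

variable {E : Type*} [NormedAddCommGroup E] [NormedSpace ℝ E] [FiniteDimensional ℝ E]

theorem ContDiffBump.exists_contDiff_abs_sub_le_mul {c : E} (b : ContDiffBump c) {ψ : E → ℝ}
    (hψ : Continuous ψ) (hψs : HasCompactSupport ψ) (hb : EqOn b 1 (tsupport ψ))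
    {δ : ℝ} (hδ : 0 < δ) :
    ∃ φ : E → ℝ, ContDiff ℝ ∞ φ ∧ HasCompactSupport φ ∧ ∀ x, |ψ x - φ x| ≤ δ * b x := by
  obtain ⟨g, hg, hgψ⟩ := (hψs.uniformContinuous_of_continuous hψ).exists_contDiff_dist_le hδ
  refine ⟨fun x => b x * g x, b.contDiff.mul hg, b.hasCompactSupport.mul_right, fun x => ?_⟩
  have hψb : ψ x = b x * ψ x := by
    by_cases hx : x ∈ tsupport ψ
    · simp [hb hx]
    · simp [image_eq_zero_of_notMem_tsupport hx]
  rw [hψb, ← mul_sub, abs_mul, abs_of_nonneg b.nonneg, mul_comm δ, abs_sub_comm]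
  exact mul_le_mul_of_nonneg_left (hgψ x).le b.nonneg

variable [MeasurableSpace E] [OpensMeasurableSpace E] {μ : ℝ → Measure E}
  [∀ s, IsLocallyFiniteMeasure (μ s)] {t : ℝ}

theorem continuousAt_integral_of_contDiff
    (hsemi : ∀ φ : E → ℝ, ContDiff ℝ 2 φ → HasCompactSupport φ → (∀ x, 0 ≤ φ x) →
      IsSemiDecreasing fun s => ∫ x, φ x ∂μ s)
    (hcut : ∀ m, ContinuousAt (fun s => ∫ x, cutoff E m x ∂μ s) t) (ht : 0 < t)
    {φ : E → ℝ} (hφ : ContDiff ℝ 2 φ) (hφs : HasCompactSupport φ) :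
    ContinuousAt (fun s => ∫ x, φ x ∂μ s) t := by
  obtain ⟨m, M, hM⟩ := exists_abs_le_mul_cutoff hφ.continuous hφs
  have hMχ : ContDiff ℝ 2 (fun x => M * cutoff E m x) := contDiff_const.mul (cutoff E m).contDiff
  have hMχs : HasCompactSupport (fun x => M * cutoff E m x) :=
    (cutoff E m).hasCompactSupport.mul_left
  have hint : ∀ s, Integrable (fun x => M * cutoff E m x) (μ s) ∧ Integrable φ (μ s) := fun s =>
    ⟨hMχ.continuous.integrable_of_hasCompactSupport hMχs,
      hφ.continuous.integrable_of_hasCompactSupport hφs⟩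
  have hplus := hsemi _ (hMχ.add hφ) (hMχs.add hφs) fun x => by
    linarith [neg_abs_le (φ x), hM x]
  have hminus := hsemi _ (hMχ.sub hφ) (hMχs.sub hφs) fun x => by
    linarith [le_abs_self (φ x), hM x]
  simp only [integral_add (hint _).1 (hint _).2, integral_sub (hint _).1 (hint _).2,
    integral_const_mul] at hplus hminus
  have hsum := hplus.continuousAt_of_continuousAt_add hminus (by
    simpa [← two_mul, mul_assoc] using (hcut m).const_mul (2 * M)) ht
  convert hsum.sub ((hcut m).const_mul M) using 2
  simp

theorem continuousAt_integral_of_continuous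
    (hsemi : ∀ φ : E → ℝ, ContDiff ℝ 2 φ → HasCompactSupport φ → (∀ x, 0 ≤ φ x) →
      IsSemiDecreasing fun s => ∫ x, φ x ∂μ s)
    (hcut : ∀ m, ContinuousAt (fun s => ∫ x, cutoff E m x ∂μ s) t) (ht : 0 < t)
    {ψ : E → ℝ} (hψ : Continuous ψ) (hψs : HasCompactSupport ψ) :
    ContinuousAt (fun s => ∫ x, ψ x ∂μ s) t := by
  obtain ⟨m, hm⟩ := exists_eqOn_cutoff_one hψs
  set B := ∫ x, cutoff E m x ∂μ t
  have hB : 0 ≤ B := integral_nonneg fun _ => (cutoff E m).nonneg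
  refine continuousAt_of_locally_uniform_approx_of_continuousAt fun u hu => ?_
  obtain ⟨ε, hε, hεu⟩ := Metric.mem_uniformity_dist.1 hu
  obtain ⟨φ, hφ, hφs, hψφ⟩ :=
    (cutoff E m).exists_contDiff_abs_sub_le_mul hψ hψs hm (δ := ε / (B + 2)) (by positivity)
  refine ⟨_, (hcut m).preimage_mem_nhds (Iio_mem_nhds (lt_add_one B)), _,
    continuousAt_integral_of_contDiff hsemi hcut ht (contDiff_infty.1 hφ 2) hφs,
    fun s (hs : ∫ x, cutoff E m x ∂μ s < B + 1) => hεu ?_⟩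
  have hint : ∀ {f : E → ℝ}, Continuous f → HasCompactSupport f → Integrable f (μ s) :=
    fun hf hfs => hf.integrable_of_hasCompactSupport hfs
  rw [Real.dist_eq, ← Real.norm_eq_abs, ← integral_sub (hint hψ hψs) (hint hφ.continuous hφs)]
  calc ‖∫ x, ψ x - φ x ∂μ s‖
      ≤ ∫ x, ε / (B + 2) * cutoff E m x ∂μ s :=
        norm_integral_le_of_norm_le ((hint (cutoff E m).continuous
          (cutoff E m).hasCompactSupport).const_mul _) (.of_forall hψφ)
    _ ≤ ε / (B + 2) * (B + 1) := by
        rw [integral_const_mul]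
        gcongr
    _ < ε := by
        rw [div_mul_eq_mul_div, div_lt_iff₀ (by positivity)]
        nlinarith

end WeakContinuity

theorem stmt_5_general (n : ℕ)
    (μ : ℝ → Measure (EuclideanSpace ℝ (Fin n)))
    (hrad : ∀ t, IsLocallyFiniteMeasure (μ t))
    (hsemi : ∀ φ : EuclideanSpace ℝ (Fin n) → ℝ,
      ContDiff ℝ 2 φ → HasCompactSupport φ → (∀ x, 0 ≤ φ x) →
      ∃ C : ℝ, 0 ≤ C ∧ AntitoneOn (fun t => (∫ x, φ x ∂ μ t) - C * t) (Set.Ici 0)) :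
    Set.Countable {t : ℝ | 0 < t ∧
      ∃ ψ : EuclideanSpace ℝ (Fin n) → ℝ, Continuous ψ ∧ HasCompactSupport ψ ∧
        (∀ x, 0 ≤ ψ x) ∧
        ∃ L R : ℝ, Tendsto (fun s => ∫ x, ψ x ∂ μ s) (𝓝[<] t) (𝓝 L) ∧
          Tendsto (fun s => ∫ x, ψ x ∂ μ s) (𝓝[>] t) (𝓝 R) ∧ L ≠ R} := by
  have := hrad
  have hχ (m : ℕ) : IsSemiDecreasing fun s => ∫ x, cutoff (EuclideanSpace ℝ (Fin n)) m x ∂μ s :=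
    hsemi _ (cutoff _ m).contDiff (cutoff _ m).hasCompactSupport fun _ => (cutoff _ m).nonneg
  refine (countable_iUnion fun m => (hχ m).countable_not_continuousAt).mono ?_
  rintro t ⟨ht, ψ, hψ, hψs, -, L, R, hL, hR, hLR⟩
  by_contra hdisc
  simp only [mem_iUnion, mem_ofPred_eq, ht, true_and, not_exists, not_not] at hdisc
  have hψt := (continuousAt_integral_of_continuous hsemi hdisc ht hψ hψs).tendsto
  exact hLR <| (tendsto_nhds_unique hL (hψt.mono_left nhdsWithin_le_nhds)).trans
    (tendsto_nhds_unique hR (hψt.mono_left nhdsWithin_le_nhds)).symm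

/-- The set of times at which the mass of a semi-decreasing family of Radon measures
is not weakly-* continuous is at most countable (used in Lemma 5.5 (3)). -/
theorem stmt_5 (n : ℕ) (hn : 1 ≤ n)
    (μ : ℝ → Measure (EuclideanSpace ℝ (Fin n)))
    (hrad : ∀ t, IsLocallyFiniteMeasure (μ t))
    (hmass : ∀ K : Set (EuclideanSpace ℝ (Fin n)), IsCompact K →
      ∃ C : ℝ≥0∞, C ≠ ⊤ ∧ ∀ t, 0 ≤ t → μ t K ≤ C)
    (hsemi : ∀ φ : EuclideanSpace ℝ (Fin n) → ℝ,
      ContDiff ℝ 2 φ → HasCompactSupport φ → (∀ x, 0 ≤ φ x) →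
      ∃ C : ℝ, 0 ≤ C ∧ AntitoneOn (fun t => (∫ x, φ x ∂ μ t) - C * t) (Set.Ici 0)) :
    Set.Countable {t : ℝ | 0 < t ∧
      ∃ ψ : EuclideanSpace ℝ (Fin n) → ℝ, Continuous ψ ∧ HasCompactSupport ψ ∧
        (∀ x, 0 ≤ ψ x) ∧
        ∃ L R : ℝ, Tendsto (fun s => ∫ x, ψ x ∂ μ s) (𝓝[<] t) (𝓝 L) ∧
          Tendsto (fun s => ∫ x, ψ x ∂ μ s) (𝓝[>] t) (𝓝 R) ∧ L ≠ R} :=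
  stmt_5_general n μ hrad hsemi
end

section
/- Let X be a measurable space, let μ and μ_j (j ∈ ℕ) be measures on X, and let f, f_j, φ : X → [0,∞] be measurable functions. Suppose that for every s ∈ (0,∞), ∫_{{x : s < φ(x)}} f dμ ≤ liminf_{j→∞} ∫_{{x : s < φ(x)}} f_j dμ_j. Then ∫ φ·f dμ ≤ liminf_{j→∞} ∫ φ·f_j dμ_j, where all integrals are Lebesgue integrals with values in [0,∞]. -/
/-!
With `ν = f • μ` and `ν_j = f_j • μ_j`, the integral `∫ φ f dμ` is `∫ φ dν`, and the
layer-cake formula writes it as `∫₀^∞ ν {φ > t} dt`. The hypothesis bounds this integrand by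
`liminf_j ν_j {φ > t}` for every `t > 0`, and Fatou's lemma in the variable `t` moves the
`liminf` outside the integral.
-/

open MeasureTheory Filter Topology Set
open scoped ENNReal NNReal

namespace MeasureTheory

variable {α : Type*} [MeasurableSpace α]

theorem measurable_meas_ofReal_lt (μ : Measure α) (f : α → ℝ≥0∞) :
    Measurable fun t : ℝ => μ {a | ENNReal.ofReal t < f a} :=
  Antitone.measurable fun _ _ hst => measure_mono fun _ ha =>
    (ENNReal.ofReal_le_ofReal hst).trans_lt ha

theorem lintegral_eq_lintegral_meas_ofReal_lt (μ : Measure α) {f : α → ℝ≥0∞}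
    (hf : AEMeasurable f μ) :
    ∫⁻ a, f a ∂μ = ∫⁻ t in Ioi 0, μ {a | ENNReal.ofReal t < f a} := by
  -- The real layer-cake formula applies to the truncations `min f n`; let `n → ∞` on both sides.
  have h_trunc (n : ℕ) : ∫⁻ a, min (f a) n ∂μ =
      ∫⁻ t in Ioi 0, μ {a | ENNReal.ofReal t < min (f a) n} := by
    have hfin (a : α) : min (f a) n ≠ ∞ := (min_lt_of_right_lt (ENNReal.natCast_lt_top n)).ne
    have h_layercake := lintegral_eq_lintegral_meas_lt μ (.of_forall fun a => ENNReal.toReal_nonneg)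
      (hf.min (aemeasurable_const (b := (n : ℝ≥0∞)))).ennreal_toReal
    simp only [ENNReal.ofReal_toReal (hfin _)] at h_layercake
    rw [h_layercake]
    refine setLIntegral_congr_fun measurableSet_Ioi fun t ht => ?_
    simp only [ENNReal.ofReal_lt_iff_lt_toReal ht.le (hfin _)]
  have h_mono_f : Monotone fun (n : ℕ) a => min (f a) n := fun m n hmn a =>
    min_le_min_left _ (by exact_mod_cast hmn)
  have h_sets (t : ℝ) : Monotone fun (n : ℕ) => {a | ENNReal.ofReal t < min (f a) n} :=
    fun m n hmn a ha => lt_of_lt_of_le ha (h_mono_f hmn a)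
  calc ∫⁻ a, f a ∂μ = ∫⁻ a, ⨆ n : ℕ, min (f a) n ∂μ := by
        congr 1 with a
        rw [← inf_iSup_eq, ENNReal.iSup_natCast, inf_top_eq]
    _ = ⨆ n : ℕ, ∫⁻ t in Ioi 0, μ {a | ENNReal.ofReal t < min (f a) n} := by
        rw [lintegral_iSup' (fun n => hf.min aemeasurable_const)
          (.of_forall fun a m n hmn => h_mono_f hmn a)]
        simp_rw [h_trunc]
    _ = ∫⁻ t in Ioi 0, ⨆ n : ℕ, μ {a | ENNReal.ofReal t < min (f a) n} :=
        (lintegral_iSup (fun n => measurable_meas_ofReal_lt μ _)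
          fun m n hmn t => measure_mono (h_sets t hmn)).symm
    _ = ∫⁻ t in Ioi 0, μ {a | ENNReal.ofReal t < f a} := by
        congr 1 with t
        rw [← (h_sets t).measure_iUnion]
        congr 1 with a
        simp only [mem_iUnion, mem_ofPred_eq, lt_min_iff, exists_and_left,
          and_iff_left (ENNReal.exists_nat_gt ENNReal.ofReal_ne_top)]

theorem lintegral_le_liminf_lintegral_of_meas_lt_le_liminf {ι : Type*} {u : Filter ι}
    [u.IsCountablyGenerated] {μ : Measure α} {μs : ι → Measure α} {f : α → ℝ≥0∞}
    (hf : Measurable f)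
    (h : ∀ s : ℝ≥0∞, 0 < s → s ≠ ∞ → μ {a | s < f a} ≤ liminf (fun i => μs i {a | s < f a}) u) :
    ∫⁻ a, f a ∂μ ≤ liminf (fun i => ∫⁻ a, f a ∂μs i) u := by
  simp_rw [lintegral_eq_lintegral_meas_ofReal_lt _ hf.aemeasurable]
  calc ∫⁻ t in Ioi 0, μ {a | ENNReal.ofReal t < f a}
      ≤ ∫⁻ t in Ioi 0, liminf (fun i => μs i {a | ENNReal.ofReal t < f a}) u :=
        setLIntegral_mono' measurableSet_Ioi fun t ht =>
          h _ (ENNReal.ofReal_pos.2 ht) ENNReal.ofReal_ne_top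
    _ ≤ _ := lintegral_liminf_le fun i => measurable_meas_ofReal_lt (μs i) f

end MeasureTheory

/-- Layer-cake/Fatou argument: lower semicontinuity on superlevel sets implies lower
semicontinuity of the weighted integral (used in the proof of Theorem 4.3). -/
theorem stmt_7 {X : Type*} [MeasurableSpace X]
    (μ : Measure X) (μs : ℕ → Measure X)
    (f : X → ℝ≥0∞) (fs : ℕ → X → ℝ≥0∞) (φ : X → ℝ≥0∞)
    (hf : Measurable f) (hfs : ∀ j, Measurable (fs j)) (hφ : Measurable φ)
    (h : ∀ s : ℝ≥0∞, 0 < s → s ≠ ⊤ →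
      (∫⁻ x in {x | s < φ x}, f x ∂ μ) ≤
        liminf (fun j => ∫⁻ x in {x | s < φ x}, fs j x ∂ μs j) atTop) :
    (∫⁻ x, φ x * f x ∂ μ) ≤ liminf (fun j => ∫⁻ x, φ x * fs j x ∂ μs j) atTop := by
  have h_withDensity {ν : Measure X} {g : X → ℝ≥0∞} (hg : Measurable g) :
      ∫⁻ x, φ x * g x ∂ν = ∫⁻ x, φ x ∂ν.withDensity g := by
    simp_rw [lintegral_withDensity_eq_lintegral_mul ν hg hφ, Pi.mul_apply, mul_comm]
  simp_rw [h_withDensity hf, h_withDensity (hfs _)]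
  refine lintegral_le_liminf_lintegral_of_meas_lt_le_liminf hφ fun s hs hs' => ?_
  simp_rw [withDensity_apply _ (measurableSet_lt measurable_const hφ)]
  exact h s hs hs'
end

section
/- Let n ≥ 1 and let μ̄ be a locally finite Borel measure on ℝⁿ × ℝ that is invariant under all translations in the last coordinate, i.e., the pushforward of μ̄ under the map (x,z) ↦ (x, z+τ) equals μ̄ for every τ ∈ ℝ. Then there exists a locally finite Borel measure μ on ℝⁿ such that μ̄ is the product measure of μ with one-dimensional Lebesgue measure: μ̄ = μ × L¹. -/
/-!
For measurable `s`, the measure `t ↦ μbar (s ×ˢ t)` on `ℝ` is translation invariant. When `s` lies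
in a compact set it is also finite on compacts, so by uniqueness of Haar measure it equals
`μbar (s ×ˢ Ioc 0 1) • volume`. Exhausting `X` by compact sets extends
`μbar (s ×ˢ t) = μ s * volume t` to all measurable `s`, where `μ s := μbar (s ×ˢ Ioc 0 1)`, and
rectangles determine a product of σ-finite measures. Finally `μ` inherits local finiteness from
`μ.prod volume`, since Lebesgue measure charges every neighbourhood.
-/

open MeasureTheory Set
open scoped ENNReal

lemma Real.eq_smul_volume_of_isAddLeftInvariant (ν : Measure ℝ) [ν.IsAddLeftInvariant]
    [IsFiniteMeasureOnCompacts ν] : ν = ν (Ioc 0 1) • volume := by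
  rw [ν.isAddLeftInvariant_eq_smul volume]
  simp

lemma MeasureTheory.Measure.isLocallyFiniteMeasure_of_prod {X Y : Type*} [TopologicalSpace X]
    [TopologicalSpace Y] [MeasurableSpace X] [MeasurableSpace Y] (μ : Measure X)
    (ν : Measure Y) [SFinite ν] [ν.IsOpenPosMeasure] [Nonempty Y]
    [IsLocallyFiniteMeasure (μ.prod ν)] : IsLocallyFiniteMeasure μ := by
  refine ⟨fun x => ?_⟩
  obtain ⟨y⟩ := ‹Nonempty Y›
  obtain ⟨W, hW, hWfin⟩ := (μ.prod ν).finiteAt_nhds (x, y)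
  obtain ⟨U, hU, V, hV, hUV⟩ := mem_nhds_prod_iff.1 hW
  have hprod : μ U * ν V < ∞ := by
    rw [← Measure.prod_prod]; exact (measure_mono hUV).trans_lt hWfin
  exact ⟨U, hU, ENNReal.lt_top_of_mul_ne_top_left hprod.ne (measure_pos_of_mem_nhds ν hV).ne'⟩

namespace MeasureTheory.Measure

variable {X : Type*} [MeasurableSpace X] (μbar : Measure (X × ℝ))

def IsZInvariant : Prop :=
  ∀ τ : ℝ, μbar.map (fun p : X × ℝ => (p.1, p.2 + τ)) = μbar

noncomputable def zMarginal (s : Set X) : Measure ℝ :=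
  (μbar.restrict (s ×ˢ univ)).map Prod.snd

noncomputable def baseMeasure : Measure X :=
  (μbar.restrict (univ ×ˢ Ioc 0 1)).map Prod.fst

variable {μbar}

lemma zMarginal_apply (s : Set X) {t : Set ℝ} (ht : MeasurableSet t) :
    μbar.zMarginal s t = μbar (s ×ˢ t) := by
  rw [zMarginal, map_apply measurable_snd ht, restrict_apply (measurable_snd ht), ← univ_prod,
    prod_inter_prod, univ_inter, inter_univ]

lemma baseMeasure_apply {s : Set X} (hs : MeasurableSet s) :
    μbar.baseMeasure s = μbar (s ×ˢ Ioc 0 1) := by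
  rw [baseMeasure, map_apply measurable_fst hs, restrict_apply (measurable_fst hs), ← prod_univ,
    prod_inter_prod, univ_inter, inter_univ]

lemma zMarginal_isAddLeftInvariant (hinv : μbar.IsZInvariant) {s : Set X}
    (hs : MeasurableSet s) : (μbar.zMarginal s).IsAddLeftInvariant := by
  refine ⟨fun τ => ?_⟩
  have hshift : Measurable fun p : X × ℝ => (p.1, p.2 + τ) :=
    measurable_fst.prodMk (measurable_snd.add_const τ)
  have hpre : (fun p : X × ℝ => (p.1, p.2 + τ)) ⁻¹' (s ×ˢ univ) = s ×ˢ univ := by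
    ext p; simp
  have hcomm : (τ + ·) ∘ Prod.snd = Prod.snd ∘ fun p : X × ℝ => (p.1, p.2 + τ) := by
    funext p; simp [add_comm]
  rw [zMarginal, map_map (measurable_const_add τ) measurable_snd, hcomm,
    ← map_map measurable_snd hshift, ← hpre, ← restrict_map hshift (hs.prod .univ), hinv τ, hpre]

lemma measure_prod_eq_mul_volume (hinv : μbar.IsZInvariant) {s : Set X} (hs : MeasurableSet s)
    (hfin : ∀ K, IsCompact K → μbar (s ×ˢ K) < ∞) {t : Set ℝ} (ht : MeasurableSet t) :
    μbar (s ×ˢ t) = μbar (s ×ˢ Ioc 0 1) * volume t := by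
  have := zMarginal_isAddLeftInvariant hinv hs
  have : IsFiniteMeasureOnCompacts (μbar.zMarginal s) :=
    ⟨fun K hK => (zMarginal_apply s hK.measurableSet).trans_lt (hfin K hK)⟩
  rw [← zMarginal_apply s ht, ← zMarginal_apply s measurableSet_Ioc]
  conv_lhs => rw [Real.eq_smul_volume_of_isAddLeftInvariant (μbar.zMarginal s)]
  rfl

section SigmaCompact

variable [TopologicalSpace X] [SigmaCompactSpace X] [IsLocallyFiniteMeasure μbar]

lemma measure_compactCovering_prod_lt_top (k : ℕ) {K : Set ℝ} (hK : IsCompact K) :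
    μbar (compactCovering X k ×ˢ K) < ∞ :=
  ((isCompact_compactCovering X k).prod hK).measure_lt_top

variable [T2Space X] [OpensMeasurableSpace X]

instance : SigmaFinite μbar.baseMeasure :=
  ⟨⟨{ set := compactCovering X
      set_mem := fun _ => mem_univ _
      finite := fun k => by
        rw [baseMeasure_apply (isCompact_compactCovering X k).measurableSet]
        exact (measure_mono (Set.prod_mono subset_rfl Ioc_subset_Icc_self)).trans_lt
          (measure_compactCovering_prod_lt_top k isCompact_Icc)
      spanning := iUnion_compactCovering X }⟩⟩

lemma measure_prod_eq_baseMeasure_mul_volume (hinv : μbar.IsZInvariant) {s : Set X}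
    (hs : MeasurableSet s) {t : Set ℝ} (ht : MeasurableSet t) :
    μbar (s ×ˢ t) = μbar.baseMeasure s * volume t := by
  have hexhaust (u : Set ℝ) : μbar (s ×ˢ u) = ⨆ k, μbar ((s ∩ compactCovering X k) ×ˢ u) := by
    have hmono : Monotone fun k => (s ∩ compactCovering X k) ×ˢ u := fun i j hij =>
      Set.prod_mono (inter_subset_inter_right s (compactCovering_subset X hij)) subset_rfl
    rw [← hmono.measure_iUnion, ← iUnion_prod_const, ← inter_iUnion, iUnion_compactCovering,
      inter_univ]
  rw [hexhaust, baseMeasure_apply hs, hexhaust, ENNReal.iSup_mul]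
  refine iSup_congr fun k => measure_prod_eq_mul_volume hinv
    (hs.inter (isCompact_compactCovering X k).measurableSet) (fun K hK => ?_) ht
  exact (measure_mono (Set.prod_mono inter_subset_right subset_rfl)).trans_lt
    (measure_compactCovering_prod_lt_top k hK)

lemma eq_baseMeasure_prod_volume (hinv : μbar.IsZInvariant) :
    μbar = μbar.baseMeasure.prod volume :=
  (prod_eq fun _ _ hs ht => measure_prod_eq_baseMeasure_mul_volume hinv hs ht).symm

end SigmaCompact

end MeasureTheory.Measure

theorem stmt_10_general (n : ℕ)
    (μbar : Measure (EuclideanSpace ℝ (Fin n) × ℝ))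
    (hrad : IsLocallyFiniteMeasure μbar)
    (hinv : ∀ τ : ℝ,
      Measure.map (fun p : EuclideanSpace ℝ (Fin n) × ℝ => (p.1, p.2 + τ)) μbar = μbar) :
    ∃ μ : Measure (EuclideanSpace ℝ (Fin n)),
      IsLocallyFiniteMeasure μ ∧ μbar = μ.prod volume := by
  have hprod := Measure.eq_baseMeasure_prod_volume hinv
  refine ⟨μbar.baseMeasure, ?_, hprod⟩
  rw [hprod] at hrad
  exact Measure.isLocallyFiniteMeasure_of_prod _ (volume : Measure ℝ)

/-- A z-invariant locally finite Borel measure on `ℝⁿ × ℝ` splits as a product of a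
locally finite measure on `ℝⁿ` with one-dimensional Lebesgue measure (Lemma 5.6 (1)). -/
theorem stmt_10 (n : ℕ) (hn : 1 ≤ n)
    (μbar : Measure (EuclideanSpace ℝ (Fin n) × ℝ))
    (hrad : IsLocallyFiniteMeasure μbar)
    (hinv : ∀ τ : ℝ,
      Measure.map (fun p : EuclideanSpace ℝ (Fin n) × ℝ => (p.1, p.2 + τ)) μbar = μbar) :
    ∃ μ : Measure (EuclideanSpace ℝ (Fin n)),
      IsLocallyFiniteMeasure μ ∧ μbar = μ.prod volume :=
  stmt_10_general n μbar hrad hinv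
end

section
/- Let n ≥ 1 and let μ̄ be a locally finite Borel measure on ℝⁿ × ℝ that is invariant under all translations in the last coordinate, i.e., the pushforward of μ̄ under the map (x,z) ↦ (x, z+τ) equals μ̄ for every τ ∈ ℝ. Let ρ₁, ρ₂ : ℝ → ℝ be continuous compactly supported functions with ∫_ℝ ρ₁(z) dz = ∫_ℝ ρ₂(z) dz, and let φ : ℝⁿ → ℝ be continuous and compactly supported. Then ∫_{ℝⁿ×ℝ} ρ₁(z) φ(x) dμ̄(x,z) = ∫_{ℝⁿ×ℝ} ρ₂(z) φ(x) dμ̄(x,z). -/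
/-!
Write `S ρ = ∫ ρ(z) φ(x) dμ̄`. Translation invariance of `μ̄` in `z` and Fubini give
`S ρ * ∫ σ = S (σ ⋆ ρ)`, so commutativity of convolution yields `S ρ * ∫ σ = S σ * ∫ ρ`.
Fixing a bump function `σ` with `∫ σ > 0` shows that `S ρ` is a multiple of `∫ ρ`.
-/

open MeasureTheory
open scoped Convolution

theorem convolution_comm_real (ρ σ : ℝ → ℝ) : σ ⋆ ρ = ρ ⋆ σ := by
  ext z
  rw [convolution_lsmul, convolution_lsmul_swap]
  simp only [smul_eq_mul, mul_comm]

theorem integral_comp_add_snd_of_map_eq {X E : Type*} [MeasurableSpace X] [NormedAddCommGroup E]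
    [NormedSpace ℝ E] {μ : Measure (X × ℝ)}
    (hμ : ∀ τ : ℝ, μ.map (fun p : X × ℝ => (p.1, p.2 + τ)) = μ) (f : X × ℝ → E) (τ : ℝ) :
    ∫ p, f (p.1, p.2 + τ) ∂μ = ∫ p, f p ∂μ :=
  MeasurePreserving.integral_comp'
    (f := (MeasurableEquiv.refl X).prodCongr (MeasurableEquiv.addRight τ)) ⟨by fun_prop, hμ τ⟩ f

section

variable {X : Type*} [TopologicalSpace X] {ρ σ : ℝ → ℝ} {φ : X → ℝ}

theorem hasCompactSupport_mul_comp_sub_mul (hρc : HasCompactSupport ρ)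
    (hσc : HasCompactSupport σ) (hφc : HasCompactSupport φ) :
    HasCompactSupport fun q : (X × ℝ) × ℝ => σ q.2 * (ρ (q.1.2 - q.2) * φ q.1.1) := by
  have hK := hσc.isCompact.add hρc.isCompact
  refine HasCompactSupport.intro' ((hφc.prod hK).prod hσc)
    (((isClosed_tsupport φ).prod hK.isClosed).prod (isClosed_tsupport σ)) fun q hq => ?_
  by_contra hne
  obtain ⟨hσq, hρq, hφq⟩ : σ q.2 ≠ 0 ∧ ρ (q.1.2 - q.2) ≠ 0 ∧ φ q.1.1 ≠ 0 := by
    simpa only [mul_ne_zero_iff] using hne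
  refine hq ⟨⟨subset_tsupport φ hφq, ?_⟩, subset_tsupport σ hσq⟩
  simpa using Set.add_mem_add (subset_tsupport σ hσq) (subset_tsupport ρ hρq)

variable [MeasurableSpace X] [OpensMeasurableSpace X] {μ : Measure (X × ℝ)}
  [IsFiniteMeasureOnCompacts μ] [SFinite μ]

theorem integral_mul_integral_eq_integral_convolution
    (hμ : ∀ τ : ℝ, μ.map (fun p : X × ℝ => (p.1, p.2 + τ)) = μ)
    (hρ : Continuous ρ) (hρc : HasCompactSupport ρ) (hσ : Continuous σ)
    (hσc : HasCompactSupport σ) (hφ : Continuous φ) (hφc : HasCompactSupport φ) :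
    (∫ p, ρ p.2 * φ p.1 ∂μ) * ∫ t, σ t = ∫ p, (σ ⋆ ρ) p.2 * φ p.1 ∂μ := by
  have hF : Integrable (fun q : (X × ℝ) × ℝ => σ q.2 * (ρ (q.1.2 - q.2) * φ q.1.1))
      (μ.prod volume) :=
    Continuous.integrable_of_hasCompactSupport (by fun_prop)
      (hasCompactSupport_mul_comp_sub_mul hρc hσc hφc)
  have hshift (t : ℝ) : ∫ p, ρ (p.2 - t) * φ p.1 ∂μ = ∫ p, ρ p.2 * φ p.1 ∂μ := by
    simpa only [sub_eq_add_neg] using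
      integral_comp_add_snd_of_map_eq hμ (fun p => ρ p.2 * φ p.1) (-t)
  calc (∫ p, ρ p.2 * φ p.1 ∂μ) * ∫ t, σ t
      = ∫ t, σ t * ∫ p, ρ (p.2 - t) * φ p.1 ∂μ := by
        simp only [hshift]
        rw [integral_mul_const, mul_comm]
    _ = ∫ t, ∫ p, σ t * (ρ (p.2 - t) * φ p.1) ∂μ := by simp only [integral_const_mul]
    _ = ∫ p, (∫ t, σ t * (ρ (p.2 - t) * φ p.1)) ∂μ := (integral_integral_swap hF).symm
    _ = ∫ p, (σ ⋆ ρ) p.2 * φ p.1 ∂μ := by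
        simp only [convolution_lsmul, smul_eq_mul, ← integral_mul_const, mul_assoc]

theorem integral_mul_integral_comm
    (hμ : ∀ τ : ℝ, μ.map (fun p : X × ℝ => (p.1, p.2 + τ)) = μ)
    (hρ : Continuous ρ) (hρc : HasCompactSupport ρ) (hσ : Continuous σ)
    (hσc : HasCompactSupport σ) (hφ : Continuous φ) (hφc : HasCompactSupport φ) :
    (∫ p, ρ p.2 * φ p.1 ∂μ) * ∫ t, σ t = (∫ p, σ p.2 * φ p.1 ∂μ) * ∫ t, ρ t := by
  rw [integral_mul_integral_eq_integral_convolution hμ hρ hρc hσ hσc hφ hφc,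
    integral_mul_integral_eq_integral_convolution hμ hσ hσc hρ hρc hφ hφc,
    convolution_comm_real]

theorem integral_mul_eq_of_integral_eq
    (hμ : ∀ τ : ℝ, μ.map (fun p : X × ℝ => (p.1, p.2 + τ)) = μ)
    (hρ : Continuous ρ) (hρc : HasCompactSupport ρ) (hσ : Continuous σ)
    (hσc : HasCompactSupport σ) (hint : ∫ t, ρ t = ∫ t, σ t)
    (hφ : Continuous φ) (hφc : HasCompactSupport φ) :
    ∫ p, ρ p.2 * φ p.1 ∂μ = ∫ p, σ p.2 * φ p.1 ∂μ := by
  let w : ContDiffBump (0 : ℝ) := ⟨1, 2, one_pos, one_lt_two⟩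
  refine mul_right_cancel₀ (w.integral_pos (μ := volume)).ne' ?_
  rw [integral_mul_integral_comm hμ hρ hρc w.continuous w.hasCompactSupport hφ hφc,
    integral_mul_integral_comm hμ hσ hσc w.continuous w.hasCompactSupport hφ hφc, hint]

end

theorem stmt_11_general (n : ℕ)
    (μbar : Measure (EuclideanSpace ℝ (Fin n) × ℝ))
    (hrad : IsLocallyFiniteMeasure μbar)
    (hinv : ∀ τ : ℝ,
      Measure.map (fun p : EuclideanSpace ℝ (Fin n) × ℝ => (p.1, p.2 + τ)) μbar = μbar)
    (ρ₁ ρ₂ : ℝ → ℝ)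
    (hρ₁ : Continuous ρ₁) (hρ₁c : HasCompactSupport ρ₁)
    (hρ₂ : Continuous ρ₂) (hρ₂c : HasCompactSupport ρ₂)
    (hint : (∫ z, ρ₁ z) = ∫ z, ρ₂ z)
    (φ : EuclideanSpace ℝ (Fin n) → ℝ)
    (hφ : Continuous φ) (hφc : HasCompactSupport φ) :
    (∫ p : EuclideanSpace ℝ (Fin n) × ℝ, ρ₁ p.2 * φ p.1 ∂ μbar) =
      ∫ p : EuclideanSpace ℝ (Fin n) × ℝ, ρ₂ p.2 * φ p.1 ∂ μbar :=
  have := hrad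
  integral_mul_eq_of_integral_eq hinv hρ₁ hρ₁c hρ₂ hρ₂c hint hφ hφc

/-- Well-definedness of the sliced measure of a z-invariant measure: the value of
`∫ ρ(z) φ(x) dμ̄` depends on `ρ` only through `∫ ρ dz` (Lemma 5.6 (1)). -/
theorem stmt_11 (n : ℕ) (hn : 1 ≤ n)
    (μbar : Measure (EuclideanSpace ℝ (Fin n) × ℝ))
    (hrad : IsLocallyFiniteMeasure μbar)
    (hinv : ∀ τ : ℝ,
      Measure.map (fun p : EuclideanSpace ℝ (Fin n) × ℝ => (p.1, p.2 + τ)) μbar = μbar)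
    (ρ₁ ρ₂ : ℝ → ℝ)
    (hρ₁ : Continuous ρ₁) (hρ₁c : HasCompactSupport ρ₁)
    (hρ₂ : Continuous ρ₂) (hρ₂c : HasCompactSupport ρ₂)
    (hint : (∫ z, ρ₁ z) = ∫ z, ρ₂ z)
    (φ : EuclideanSpace ℝ (Fin n) → ℝ)
    (hφ : Continuous φ) (hφc : HasCompactSupport φ) :
    (∫ p : EuclideanSpace ℝ (Fin n) × ℝ, ρ₁ p.2 * φ p.1 ∂ μbar) =
      ∫ p : EuclideanSpace ℝ (Fin n) × ℝ, ρ₂ p.2 * φ p.1 ∂ μbar :=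
  stmt_11_general n μbar hrad hinv ρ₁ ρ₂ hρ₁ hρ₁c hρ₂ hρ₂c hint φ hφ hφc
end
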